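/- Let ψ : Ŵ → V be an invariant surjection with spinor p, and let v ∈ V satisfy Q(v) ≠ 0. Then there are exactly two 3-dimensional isotropic subspaces U ⊆ V such that the image ψ(L_U) equals the line ℂv; denoting them U_1 ≠ U_2, one has U_1 ∩ U_2 = {0} and U_1 + U_2 = {u ∈ V : B(u,v) = 0}, the orthogonal complement of v. -/

import Mathlib

namespace SSD

noncomputable section

/-- `V` is the 7-dimensional complex vector space `ℂ^7`. -/
abbrev V7 : Type := Fin 7 → ℂ

/-- `Ŵ` is the 8-dimensional spin space, with basis (in this order):
`1, v̂₅, v̂₆, v̂₇, v̂₅v̂₆, v̂₆v̂₇, v̂₅v̂₇, v̂₅v̂₆v̂₇`. -/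
abbrev W8 : Type := Fin 8 → ℂ

/-- The constant `1/√2` as a complex number. -/
def is2 : ℂ := ((Real.sqrt 2 : ℝ) : ℂ)⁻¹

/-- The Clifford action of `v ∈ V` on `x ∈ Ŵ`:  `e₅,e₆,e₇` act by exterior
multiplication by `v̂₅,v̂₆,v̂₇`; `e₁,e₂,e₃` act by `−∂/∂v̂₇, ∂/∂v̂₆, −∂/∂v̂₅`;
`e₄` acts by `(1/√2)·(−1)^deg`. Written out in coordinates. -/
def actFun (v : V7) (x : W8) : W8 := fun k =>
  match k with
  | 0 => -(v 0) * x 3 + v 1 * x 2 - v 2 * x 1 + is2 * v 3 * x 0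
  | 1 => v 0 * x 6 - v 1 * x 4 - is2 * v 3 * x 1 + v 4 * x 0
  | 2 => v 0 * x 5 - v 2 * x 4 - is2 * v 3 * x 2 + v 5 * x 0
  | 3 => v 1 * x 5 - v 2 * x 6 - is2 * v 3 * x 3 + v 6 * x 0
  | 4 => -(v 0) * x 7 + is2 * v 3 * x 4 + v 4 * x 2 - v 5 * x 1
  | 5 => -(v 2) * x 7 + is2 * v 3 * x 5 + v 5 * x 3 - v 6 * x 2
  | 6 => -(v 1) * x 7 + is2 * v 3 * x 6 + v 4 * x 3 - v 6 * x 1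
  | 7 => -(is2 * v 3) * x 7 + v 4 * x 5 - v 5 * x 6 + v 6 * x 4

/-- The action `v · x`, packaged as a bilinear map. -/
def act : V7 →ₗ[ℂ] W8 →ₗ[ℂ] W8 :=
  LinearMap.mk₂ ℂ actFun
    (fun m m' n => by funext k; fin_cases k <;> simp [actFun] <;> ring)
    (fun c m n => by funext k; fin_cases k <;> simp [actFun] <;> ring)
    (fun m n n' => by funext k; fin_cases k <;> simp [actFun] <;> ring)
    (fun c m n => by funext k; fin_cases k <;> simp [actFun] <;> ring)

/-- The bilinear form `B` on `V`: `B(eᵢ,eⱼ) = (−1)^(i+1)` if `i+j=8`, else `0`. -/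
def Bform (u w : V7) : ℂ :=
  u 0 * w 6 + u 6 * w 0 - u 1 * w 5 - u 5 * w 1 + u 2 * w 4 + u 4 * w 2 - u 3 * w 3

/-- The quadratic form `Q(v) = B(v,v)/2` on `V`. -/
def Qform (v : V7) : ℂ := Bform v v / 2

/-- The quadratic form `Q̂` on `Ŵ`:
`Q̂ = α_∅α₅₆₇ + α₆α₅₇ − α₇α₅₆ − α₆₇α₅` in the coordinates of the basis above. -/
def Qhat (x : W8) : ℂ := x 0 * x 7 + x 2 * x 6 - x 3 * x 4 - x 5 * x 1

/-- The bilinear form `B̂(p,q) = Q̂(p+q) − Q̂(p) − Q̂(q)` on `Ŵ`. -/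
def Bhat (p q : W8) : ℂ := Qhat (p + q) - Qhat p - Qhat q

/-- A subspace `U ⊆ V` is isotropic if `B` vanishes identically on it. -/
def IsIsotropic (U : Submodule ℂ V7) : Prop :=
  ∀ u ∈ U, ∀ w ∈ U, Bform u w = 0

/-- `L_U = {x ∈ Ŵ | u·x = 0 for all u ∈ U}`. -/
def LU (U : Submodule ℂ V7) : Submodule ℂ W8 :=
  ⨅ u ∈ U, LinearMap.ker (act u)

/-- `ψ : Ŵ → V` is an invariant surjection with spinor `p` if `p ≠ 0`, `ψ(p)=0`
and `ψ(v·p) = v` for all `v ∈ V`. -/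
def IsInvSurj (ψ : W8 →ₗ[ℂ] V7) (p : W8) : Prop :=
  p ≠ 0 ∧ ψ p = 0 ∧ ∀ v : V7, ψ (act v p) = v

/-!
A nonzero spinor `x` with `Q̂(x) = 0` is pure: `u ↦ u · x` has totally isotropic image in `Ŵ`,
hence rank at most 4, while its kernel, the annihilator of `x`, is isotropic in `V`, hence of
dimension at most 3; so the annihilator `U_x` has dimension 3. Each isotropic vector of a basis of
`U` halves the spinor space, so `L_U` is a line for every 3-dimensional isotropic `U`, and
`L_{U_x} = ℂx`; conversely `U = U_x` for any nonzero `x ∈ L_U`.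

The spinor `p` is not null, since `u ↦ u · p` is injective, and `Ŵ = ℂp ⊕ V · p`. A spinor over
`v` is therefore `x = a p + v · p`, with `Q̂(x) = (a² + Q(v)) Q̂(p)`, which vanishes exactly for
`a = ±μ`, `μ² = -Q(v)`. These two spinors are the `±μ`-eigenvectors of `v`, so their annihilators
lie in `v^⊥`; they meet trivially because the two spinors differ by `2μ p`, and `3 + 3 = dim v^⊥`.
-/

open Module

section LinearAlgebra

variable {K E : Type*} [Field K] [AddCommGroup E] [Module K E]

theorem two_mul_finrank_le_of_le_orthogonal [FiniteDimensional K E]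
    {B : LinearMap.BilinForm K E} (hB : B.Nondegenerate) {N : Submodule K E}
    (hN : N ≤ B.orthogonal N) : 2 * finrank K N ≤ finrank K E := by
  have := Submodule.finrank_mono hN
  rw [LinearMap.BilinForm.finrank_orthogonal hB] at this
  have := N.finrank_le
  omega

theorem exists_bilinForm_eq_of_linearIndependent [FiniteDimensional K E] {ι : Type*}
    {B : LinearMap.BilinForm K E} (hB : B.Nondegenerate) {f : ι → E}
    (hf : LinearIndependent K f) (c : ι → K) : ∃ w, ∀ i, B (f i) w = c i := by
  obtain ⟨φ, hφ⟩ := LinearMap.dualMap_surjective_of_injective hf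
    (Finsupp.linearCombination K c)
  refine ⟨(B.flip.toDual hB.flip).symm φ, fun i => ?_⟩
  have hφi := LinearMap.congr_fun hφ (Finsupp.single i 1)
  simp only [LinearMap.dualMap_apply, Finsupp.linearCombination_single, one_smul] at hφi
  exact (LinearMap.BilinForm.apply_toDual_symm_apply (B := B.flip) φ (f i)).trans hφi

/-- `a` maps `N` onto `ker a ⊓ N`, so rank–nullity on `N` halves the dimension. -/
theorem two_mul_finrank_ker_inf [FiniteDimensional K E] (a b : E →ₗ[K] E)
    (ha : ∀ x, a (a x) = 0) (hab : ∀ x, a (b x) + b (a x) = x) {N : Submodule K E}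
    (haN : ∀ x ∈ N, a x ∈ N) (hbN : ∀ x ∈ N, b x ∈ N) :
    2 * finrank K ↥(LinearMap.ker a ⊓ N) = finrank K N := by
  have hmap : N.map a = LinearMap.ker a ⊓ N := by
    refine le_antisymm ?_ fun x ⟨hx, hxN⟩ => ⟨b x, hbN x hxN, ?_⟩
    · rintro _ ⟨y, hy, rfl⟩
      exact ⟨ha y, haN y hy⟩
    · simpa [LinearMap.mem_ker.mp hx] using hab x
  have hker : finrank K (LinearMap.ker (a.domRestrict N)) = finrank K ↥(LinearMap.ker a ⊓ N) := by
    rw [LinearMap.ker_domRestrict, ← Submodule.finrank_map_subtype_eq, Submodule.map_comap_subtype,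
      inf_comm]
  have := LinearMap.finrank_range_add_finrank_ker (a.domRestrict N)
  rw [LinearMap.range_domRestrict, hmap, hker] at this
  omega

theorem sup_eq_of_inf_eq_bot [FiniteDimensional K E] {U₁ U₂ P : Submodule K E} (h₁ : U₁ ≤ P)
    (h₂ : U₂ ≤ P) (hinf : U₁ ⊓ U₂ = ⊥) (hP : finrank K P ≤ finrank K U₁ + finrank K U₂) : U₁ ⊔ U₂ = P := by
  refine Submodule.eq_of_le_of_finrank_le (sup_le h₁ h₂) ?_
  have := Submodule.finrank_sup_add_finrank_inf_eq U₁ U₂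
  rw [hinf, finrank_bot] at this
  omega

end LinearAlgebra

theorem is2_sq : is2 ^ 2 = 2⁻¹ := by
  rw [is2, inv_pow, ← Complex.ofReal_pow, Real.sq_sqrt zero_le_two, Complex.ofReal_ofNat]

theorem act_apply (u : V7) (x : W8) : act u x = actFun u x := rfl

theorem act_act_add_act_act (u w : V7) (x : W8) :
    act u (act w x) + act w (act u x) = -Bform u w • x := by
  funext k
  fin_cases k <;>
    simp only [act_apply, actFun, Bform, Fin.zero_eta, Fin.mk_one, Fin.reduceFinMk, Fin.isValue,
      Pi.add_apply, Pi.smul_apply, smul_eq_mul] <;>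
    ring_nf <;> simp only [is2_sq] <;> ring

theorem act_act_self (u : V7) (x : W8) : act u (act u x) = -Qform u • x := by
  have h := act_act_add_act_act u u x
  rw [← two_smul ℂ] at h
  rw [Qform, ← inv_smul_smul₀ (two_ne_zero' ℂ) (act u (act u x)), h, smul_smul]
  ring_nf

theorem act_act_eq_zero_of_Bform_eq_zero {u w : V7} {x : W8} (huw : Bform u w = 0)
    (hx : act u x = 0) : act u (act w x) = 0 := by
  have h := act_act_add_act_act u w x
  rwa [hx, map_zero, add_zero, huw, neg_zero, zero_smul] at h

theorem Bform_comm (u w : V7) : Bform u w = Bform w u := by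
  simp only [Bform]; ring

def formV : LinearMap.BilinForm ℂ V7 :=
  LinearMap.mk₂ ℂ Bform
    (fun _ _ _ => by simp only [Bform, Pi.add_apply]; ring)
    (fun _ _ _ => by simp only [Bform, Pi.smul_apply, smul_eq_mul]; ring)
    (fun _ _ _ => by simp only [Bform, Pi.add_apply]; ring)
    (fun _ _ _ => by simp only [Bform, Pi.smul_apply, smul_eq_mul]; ring)

@[simp]
theorem formV_apply (u w : V7) : formV u w = Bform u w := rfl

theorem formV_isRefl : formV.IsRefl := fun u w h => (Bform_comm w u).trans h

theorem formV_nondegenerate : formV.Nondegenerate := by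
  refine formV_isRefl.nondegenerate_iff_separatingLeft.mpr fun u hu => funext fun i => ?_
  have := hu (Pi.single i.rev 1)
  fin_cases i <;> simpa [Bform] using this

theorem IsIsotropic.le_orthogonal {U : Submodule ℂ V7} (hU : IsIsotropic U) :
    U ≤ formV.orthogonal U :=
  fun w hw u hu => hU u hu w hw

theorem IsIsotropic.finrank_le {U : Submodule ℂ V7} (hU : IsIsotropic U) : finrank ℂ U ≤ 3 := by
  have := two_mul_finrank_le_of_le_orthogonal formV_nondegenerate hU.le_orthogonal
  rw [finrank_fin_fun] at this
  omega

theorem exists_Bform_eq_neg_one {u : V7} (hu : u ≠ 0) : ∃ w, Bform u w = -1 := by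
  simpa using exists_bilinForm_eq_of_linearIndependent formV_nondegenerate
    (LinearIndependent.of_subsingleton (v := fun _ : Unit => u) () hu) (fun _ => -1)

theorem mem_orthogonal_span_singleton_iff {u v : V7} :
    u ∈ formV.orthogonal (Submodule.span ℂ {v}) ↔ Bform u v = 0 := by
  refine ⟨fun h => (Bform_comm u v).trans (h v (Submodule.mem_span_singleton_self v)), ?_⟩
  rintro h _ hw
  obtain ⟨t, rfl⟩ := Submodule.mem_span_singleton.mp hw
  rw [LinearMap.map_smul₂, formV_apply, Bform_comm, h, smul_zero]

theorem finrank_orthogonal_span_singleton {v : V7} (hv : v ≠ 0) :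
    finrank ℂ (formV.orthogonal (Submodule.span ℂ {v})) = 6 := by
  rw [LinearMap.BilinForm.finrank_orthogonal formV_nondegenerate, finrank_span_singleton hv,
    finrank_fin_fun]

theorem Bhat_eq (x y : W8) : Bhat x y = x 0 * y 7 + x 7 * y 0 + x 2 * y 6 + x 6 * y 2
    - x 3 * y 4 - x 4 * y 3 - x 5 * y 1 - x 1 * y 5 := by
  simp only [Bhat, Qhat, Pi.add_apply]; ring

def formW : LinearMap.BilinForm ℂ W8 :=
  LinearMap.mk₂ ℂ Bhat
    (fun _ _ _ => by simp only [Bhat_eq, Pi.add_apply]; ring)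
    (fun _ _ _ => by simp only [Bhat_eq, Pi.smul_apply, smul_eq_mul]; ring)
    (fun _ _ _ => by simp only [Bhat_eq, Pi.add_apply]; ring)
    (fun _ _ _ => by simp only [Bhat_eq, Pi.smul_apply, smul_eq_mul]; ring)

@[simp]
theorem formW_apply (x y : W8) : formW x y = Bhat x y := rfl

theorem Bhat_comm (x y : W8) : Bhat x y = Bhat y x := by
  simp only [Bhat_eq]; ring

theorem Bhat_self (x : W8) : Bhat x x = 2 * Qhat x := by
  simp only [Bhat_eq, Qhat]; ring

theorem formW_isRefl : formW.IsRefl := fun x y h => (Bhat_comm y x).trans h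

theorem formW_nondegenerate : formW.Nondegenerate := by
  refine formW_isRefl.nondegenerate_iff_separatingLeft.mpr fun x hx => funext fun i => ?_
  have := hx (Pi.single (![7, 5, 6, 4, 3, 1, 2, 0] i) 1)
  fin_cases i <;> simpa [Bhat_eq] using this

theorem Bhat_act_left (u : V7) (x y : W8) : Bhat (act u x) y = -Bhat x (act u y) := by
  simp only [Bhat_eq, act_apply, actFun]; ring

theorem Bhat_act_self (u : V7) (x : W8) : Bhat (act u x) x = 0 := by
  have := Bhat_act_left u x x
  rw [Bhat_comm x] at this
  linear_combination this / 2

theorem Qhat_smul_add_act (a : ℂ) (u : V7) (x : W8) :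
    Qhat (a • x + act u x) = (a ^ 2 + Qform u) * Qhat x := by
  have h := Bhat_self (a • x + act u x)
  have hux : Bhat (act u x) (act u x) = Qform u * Bhat x x := by
    rw [Bhat_act_left, act_act_self]
    simp only [← formW_apply, map_smul, smul_eq_mul]
    ring
  simp only [← formW_apply, map_add, map_smul, LinearMap.add_apply, LinearMap.smul_apply,
    smul_eq_mul] at h
  simp only [formW_apply, hux, Bhat_comm x (act u x), Bhat_act_self, Bhat_self] at h
  linear_combination -h / 2

def annihilator (x : W8) : Submodule ℂ V7 := LinearMap.ker (act.flip x)

theorem mem_annihilator {x : W8} {u : V7} : u ∈ annihilator x ↔ act u x = 0 := Iff.rfl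

theorem mem_LU_iff {U : Submodule ℂ V7} {x : W8} : x ∈ LU U ↔ U ≤ annihilator x := by
  simp only [LU, Submodule.mem_iInf, LinearMap.mem_ker]
  rfl

theorem Bform_eq_zero_of_act_eq_zero {u w : V7} {x : W8} {μ : ℂ} (hx : x ≠ 0)
    (hu : act u x = 0) (hw : act w x = μ • x) : Bform u w = 0 := by
  have h := act_act_add_act_act u w x
  rw [hw, hu, map_smul, hu, map_zero, smul_zero, add_zero, eq_comm, smul_eq_zero] at h
  exact neg_eq_zero.mp (h.resolve_right hx)

theorem isIsotropic_annihilator {x : W8} (hx : x ≠ 0) : IsIsotropic (annihilator x) :=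
  fun _ hu _ hw => Bform_eq_zero_of_act_eq_zero hx hu (hw.trans (zero_smul ℂ x).symm)

theorem Qhat_eq_zero_of_act_eq_zero {u : V7} {x : W8} (hu : u ≠ 0) (hx : act u x = 0) :
    Qhat x = 0 := by
  obtain ⟨w, hw⟩ := exists_Bform_eq_neg_one hu
  have hx' : act u (act w x) = x := by simpa [hw, hx] using act_act_add_act_act u w x
  have : 2 * Qhat x = 0 := calc
    2 * Qhat x = Bhat (act u (act w x)) x := by rw [hx', Bhat_self]
    _ = 0 := by rw [Bhat_act_left, hx]; simp [Bhat_eq]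
  simpa using this

theorem Bhat_act_act_of_Qhat_eq_zero {x : W8} (hx : Qhat x = 0) (u w : V7) :
    Bhat (act u x) (act w x) = 0 := by
  have h := congrArg (formW x) (act_act_add_act_act u w x)
  have e₁ : Bhat x (act u (act w x)) = -Bhat (act u x) (act w x) := by
    rw [Bhat_comm, Bhat_act_left, Bhat_comm]
  have e₂ : Bhat x (act w (act u x)) = -Bhat (act u x) (act w x) := by
    rw [Bhat_comm, Bhat_act_left]
  simp only [map_add, map_smul, smul_eq_mul, formW_apply, e₁, e₂, Bhat_self, hx] at h
  linear_combination -h / 2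

theorem three_le_finrank_annihilator {x : W8} (hx : Qhat x = 0) :
    3 ≤ finrank ℂ (annihilator x) := by
  have hiso : LinearMap.range (act.flip x) ≤ formW.orthogonal (LinearMap.range (act.flip x)) := by
    rintro _ ⟨w, rfl⟩ _ ⟨u, rfl⟩
    exact Bhat_act_act_of_Qhat_eq_zero hx u w
  have hrange := two_mul_finrank_le_of_le_orthogonal formW_nondegenerate hiso
  have hrank := LinearMap.finrank_range_add_finrank_ker (act.flip x)
  rw [finrank_fin_fun] at hrange hrank
  rw [annihilator]
  omega

theorem finrank_annihilator {x : W8} (hx0 : x ≠ 0) (hx : Qhat x = 0) :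
    finrank ℂ (annihilator x) = 3 :=
  le_antisymm (isIsotropic_annihilator hx0).finrank_le (three_le_finrank_annihilator hx)

theorem eq_annihilator_of_mem_LU {U : Submodule ℂ V7} (hU3 : finrank ℂ U = 3) {x : W8}
    (hx0 : x ≠ 0) (hx : x ∈ LU U) : U = annihilator x :=
  Submodule.eq_of_le_of_finrank_le (mem_LU_iff.mp hx)
    (hU3 ▸ (isIsotropic_annihilator hx0).finrank_le)

theorem two_pow_mul_finrank_iInf_ker_act : ∀ (k : ℕ) (u : Fin k → V7), LinearIndependent ℂ u →
    (∀ i j, Bform (u i) (u j) = 0) → 2 ^ k * finrank ℂ ↥(⨅ i, LinearMap.ker (act (u i))) = 8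
  | 0, u, _, _ => by rw [iInf_of_empty, finrank_top, finrank_fin_fun, pow_zero, one_mul]
  | k + 1, u, hli, hiso => by
    obtain ⟨w, hw⟩ := exists_bilinForm_eq_of_linearIndependent formV_nondegenerate hli
      (Fin.cons (-1) 0)
    set N := ⨅ i : Fin k, LinearMap.ker (act (u i.succ))
    have hN : ∀ z, (∀ i : Fin k, Bform (u i.succ) z = 0) → ∀ x ∈ N, act z x ∈ N := by
      intro z hz x hx
      simp only [N, Submodule.mem_iInf, LinearMap.mem_ker] at hx ⊢
      exact fun i => act_act_eq_zero_of_Bform_eq_zero (hz i) (hx i)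
    have hsplit : ⨅ i, LinearMap.ker (act (u i)) = LinearMap.ker (act (u 0)) ⊓ N := by
      ext x
      simp [N, Submodule.mem_iInf, Fin.forall_fin_succ]
    have half := two_mul_finrank_ker_inf (act (u 0)) (act w)
      (fun x => by rw [act_act_self, Qform, hiso, zero_div, neg_zero, zero_smul])
      (fun x => by simpa [show Bform (u 0) w = -1 from hw 0] using act_act_add_act_act (u 0) w x)
      (hN _ fun i => hiso _ _) (hN _ fun i => by simpa using hw i.succ)
    have ih := two_pow_mul_finrank_iInf_ker_act k (fun i => u i.succ)
      (hli.comp _ (Fin.succ_injective _)) fun i j => hiso _ _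
    rw [hsplit, pow_succ, mul_assoc, half, ih]

theorem LU_eq_iInf_ker {U : Submodule ℂ V7} {ι : Type*} (b : Basis ι ℂ U) :
    LU U = ⨅ i, LinearMap.ker (act (b i)) := by
  have hspan : Submodule.span ℂ (Set.range (U.subtype ∘ b)) = U := by
    rw [Set.range_comp, Submodule.span_image, b.span_eq, Submodule.map_top,
      Submodule.range_subtype]
  ext x
  have hle : U ≤ annihilator x ↔ Submodule.span ℂ (Set.range (U.subtype ∘ b)) ≤ annihilator x := by
    rw [hspan]
  rw [mem_LU_iff, hle, Submodule.span_le]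
  simp [Set.range_subset_iff, Submodule.mem_iInf, mem_annihilator]

theorem finrank_LU {U : Submodule ℂ V7} (hU3 : finrank ℂ U = 3) (hU : IsIsotropic U) :
    finrank ℂ (LU U) = 1 := by
  let b := Module.finBasisOfFinrankEq ℂ U hU3
  have := two_pow_mul_finrank_iInf_ker_act 3 (fun i => b i)
    (b.linearIndependent.map' U.subtype U.ker_subtype) fun i j => hU _ (b i).2 _ (b j).2
  rw [LU_eq_iInf_ker b]
  omega

theorem LU_annihilator {x : W8} (hx0 : x ≠ 0) (hx : Qhat x = 0) :
    LU (annihilator x) = Submodule.span ℂ {x} := by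
  refine (Submodule.eq_of_le_of_finrank_le ?_ ?_).symm
  · exact Submodule.span_le.mpr (Set.singleton_subset_iff.mpr (mem_LU_iff.mpr le_rfl))
  · rw [finrank_LU (finrank_annihilator hx0 hx) (isIsotropic_annihilator hx0),
      finrank_span_singleton hx0]

def IsMaxIsotropicOver (ψ : W8 →ₗ[ℂ] V7) (v : V7) (U : Submodule ℂ V7) : Prop :=
  finrank ℂ U = 3 ∧ IsIsotropic U ∧ Submodule.map ψ (LU U) = Submodule.span ℂ {v}

section InvariantSurjection

variable {ψ : W8 →ₗ[ℂ] V7} {p : W8}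

theorem IsInvSurj.annihilator_eq_bot (h : IsInvSurj ψ p) : annihilator p = ⊥ :=
  eq_bot_iff.mpr fun u hu => by simpa [mem_annihilator.mp hu] using (h.2.2 u).symm

theorem IsInvSurj.Qhat_ne_zero (h : IsInvSurj ψ p) : Qhat p ≠ 0 := fun hp => by
  have := three_le_finrank_annihilator hp
  rw [h.annihilator_eq_bot, finrank_bot] at this
  omega

theorem IsInvSurj.ker_eq_span (h : IsInvSurj ψ p) : LinearMap.ker ψ = Submodule.span ℂ {p} := by
  have hψ : LinearMap.range ψ = ⊤ := LinearMap.range_eq_top.mpr fun v => ⟨act v p, h.2.2 v⟩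
  have := LinearMap.finrank_range_add_finrank_ker ψ
  rw [hψ, finrank_top, finrank_fin_fun, finrank_fin_fun] at this
  refine (Submodule.eq_of_le_of_finrank_le ?_ ?_).symm
  · exact Submodule.span_le.mpr (Set.singleton_subset_iff.mpr h.2.1)
  · rw [finrank_span_singleton h.1]
    omega

theorem IsInvSurj.exists_eq_smul_add_act (h : IsInvSurj ψ p) (x : W8) :
    ∃ a : ℂ, x = a • p + act (ψ x) p := by
  have hx : x - act (ψ x) p ∈ LinearMap.ker ψ := by simp [h.2.2]
  rw [h.ker_eq_span, Submodule.mem_span_singleton] at hx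
  obtain ⟨a, ha⟩ := hx
  exact ⟨a, by rw [ha, sub_add_cancel]⟩

/-- Since `v · v · p = -Q(v) p`, the plane spanned by `p` and `v · p` is `v`-stable, and for
`μ² = -Q(v)` this is its `μ`-eigenvector. -/
def eigenSpinor (p : W8) (v : V7) (μ : ℂ) : W8 := μ • p + act v p

variable {v : V7} {μ : ℂ}

theorem IsInvSurj.apply_eigenSpinor (h : IsInvSurj ψ p) : ψ (eigenSpinor p v μ) = v := by
  simp [eigenSpinor, h.2.1, h.2.2]

theorem act_eigenSpinor (hμ : μ ^ 2 = -Qform v) :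
    act v (eigenSpinor p v μ) = μ • eigenSpinor p v μ := by
  simp only [eigenSpinor, map_add, map_smul, act_act_self, ← hμ, smul_add, smul_smul]
  rw [add_comm, sq]

theorem Qhat_eigenSpinor (hμ : μ ^ 2 = -Qform v) : Qhat (eigenSpinor p v μ) = 0 := by
  rw [eigenSpinor, Qhat_smul_add_act, hμ, neg_add_cancel, zero_mul]

theorem IsInvSurj.eigenSpinor_ne_zero (h : IsInvSurj ψ p) (hv : v ≠ 0) :
    eigenSpinor p v μ ≠ 0 := fun h0 => by
  rw [← h.apply_eigenSpinor (v := v) (μ := μ), h0, map_zero] at hv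
  exact hv rfl

theorem annihilator_eigenSpinor_le_orthogonal (hμ : μ ^ 2 = -Qform v)
    (hx0 : eigenSpinor p v μ ≠ 0) :
    annihilator (eigenSpinor p v μ) ≤ formV.orthogonal (Submodule.span ℂ {v}) := fun _ hu =>
  mem_orthogonal_span_singleton_iff.mpr (Bform_eq_zero_of_act_eq_zero hx0 hu (act_eigenSpinor hμ))

theorem IsInvSurj.annihilator_eigenSpinor_inf_eq_bot (h : IsInvSurj ψ p) (hμ : μ ≠ 0) :
    annihilator (eigenSpinor p v μ) ⊓ annihilator (eigenSpinor p v (-μ)) = ⊥ := by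
  rw [eq_bot_iff, ← h.annihilator_eq_bot]
  rintro u ⟨h₁, h₂⟩
  have hu : act u (eigenSpinor p v μ - eigenSpinor p v (-μ)) = 0 := by
    rw [map_sub, mem_annihilator.mp h₁, mem_annihilator.mp h₂, sub_self]
  have hdiff : eigenSpinor p v μ - eigenSpinor p v (-μ) = (2 * μ) • p := by
    simp only [eigenSpinor]
    module
  rw [hdiff, map_smul, smul_eq_zero] at hu
  exact hu.resolve_left (mul_ne_zero two_ne_zero hμ)

theorem IsInvSurj.isMaxIsotropicOver_annihilator_eigenSpinor (h : IsInvSurj ψ p) (hv : v ≠ 0)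
    (hμ : μ ^ 2 = -Qform v) : IsMaxIsotropicOver ψ v (annihilator (eigenSpinor p v μ)) := by
  have hx0 := h.eigenSpinor_ne_zero (μ := μ) hv
  refine ⟨finrank_annihilator hx0 (Qhat_eigenSpinor hμ), isIsotropic_annihilator hx0, ?_⟩
  rw [LU_annihilator hx0 (Qhat_eigenSpinor hμ), Submodule.map_span, Set.image_singleton,
    h.apply_eigenSpinor]

theorem IsInvSurj.eq_annihilator_eigenSpinor (h : IsInvSurj ψ p) (hv : v ≠ 0)
    (hμ : μ ^ 2 = -Qform v) {U : Submodule ℂ V7} (hU : IsMaxIsotropicOver ψ v U) :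
    U = annihilator (eigenSpinor p v μ) ∨ U = annihilator (eigenSpinor p v (-μ)) := by
  obtain ⟨hU3, -, hUv⟩ := hU
  obtain ⟨x, hxU, hψx⟩ : v ∈ Submodule.map ψ (LU U) := hUv ▸ Submodule.mem_span_singleton_self v
  have hx0 : x ≠ 0 := by
    rintro rfl
    exact hv (by rw [← hψx, map_zero])
  have hU0 : U ≠ ⊥ := by
    rintro rfl
    simp at hU3
  obtain ⟨u, hu, hu0⟩ := Submodule.exists_mem_ne_zero_of_ne_bot hU0
  have hQx : Qhat x = 0 := Qhat_eq_zero_of_act_eq_zero hu0 (mem_LU_iff.mp hxU hu)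
  obtain ⟨a, ha⟩ := h.exists_eq_smul_add_act x
  rw [hψx] at ha
  rw [ha, Qhat_smul_add_act, mul_eq_zero, or_iff_left h.Qhat_ne_zero] at hQx
  have : a = μ ∨ a = -μ := sq_eq_sq_iff_eq_or_eq_neg.mp (by linear_combination hQx - hμ)
  rw [eq_annihilator_of_mem_LU hU3 hx0 hxU, ha]
  rcases this with rfl | rfl
  · exact Or.inl rfl
  · exact Or.inr rfl

end InvariantSurjection

/-- for an invariant surjection `ψ` with spinor `p` and a
non-isotropic `v ∈ V`, there are exactly two 3-dimensional isotropic subspaces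
`U ⊆ V` with `ψ(L_U) = ℂv`; they intersect trivially and their sum is the
orthogonal complement of `v`. -/
theorem statement_12 (ψ : W8 →ₗ[ℂ] V7) (p : W8) (h : IsInvSurj ψ p)
    (v : V7) (hq : Qform v ≠ 0) :
    ∃ U₁ U₂ : Submodule ℂ V7, U₁ ≠ U₂ ∧
      (Module.finrank ℂ U₁ = 3 ∧ IsIsotropic U₁ ∧
        Submodule.map ψ (LU U₁) = Submodule.span ℂ {v}) ∧
      (Module.finrank ℂ U₂ = 3 ∧ IsIsotropic U₂ ∧
        Submodule.map ψ (LU U₂) = Submodule.span ℂ {v}) ∧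
      (∀ U : Submodule ℂ V7, Module.finrank ℂ U = 3 → IsIsotropic U →
        Submodule.map ψ (LU U) = Submodule.span ℂ {v} → U = U₁ ∨ U = U₂) ∧
      U₁ ⊓ U₂ = ⊥ ∧
      ((U₁ ⊔ U₂ : Submodule ℂ V7) : Set V7) = {u : V7 | Bform u v = 0} := by
  have hv : v ≠ 0 := by
    rintro rfl
    simp [Qform, Bform] at hq
  obtain ⟨c, hc⟩ := IsAlgClosed.exists_pow_nat_eq (-Qform v) two_pos
  have hc0 : c ≠ 0 := by
    rintro rfl
    exact hq (by linear_combination hc)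
  have hc' : (-c) ^ 2 = -Qform v := by rw [neg_sq, hc]
  have h₁ := h.isMaxIsotropicOver_annihilator_eigenSpinor hv hc
  have h₂ := h.isMaxIsotropicOver_annihilator_eigenSpinor hv hc'
  have hinf := h.annihilator_eigenSpinor_inf_eq_bot (v := v) hc0
  refine ⟨_, _, fun heq => ?_, h₁, h₂, fun U h3 hiso hmap =>
    h.eq_annihilator_eigenSpinor hv hc ⟨h3, hiso, hmap⟩, hinf, ?_⟩
  · rw [heq, inf_idem] at hinf
    have h₂3 := h₂.1
    rw [hinf, finrank_bot] at h₂3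
    omega
  · rw [sup_eq_of_inf_eq_bot (annihilator_eigenSpinor_le_orthogonal hc (h.eigenSpinor_ne_zero hv))
      (annihilator_eigenSpinor_le_orthogonal hc' (h.eigenSpinor_ne_zero hv)) hinf
      (by rw [h₁.1, h₂.1, finrank_orthogonal_span_singleton hv])]
    ext u
    exact mem_orthogonal_span_singleton_iff

end
end SSD
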